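/- Let (Q, +) be an abelian group, let φ and ψ be automorphisms of (Q, +), and define the T-quasigroup operation x·y = φ(x) + ψ(y). Then the Schröder identity (x·y)·(y·x) = x holds for all x, y ∈ Q if and only if: (i) φ(φ(x)) + ψ(ψ(x)) = x for all x (i.e. φ² + ψ² = ε, the identity map); and (ii) φ(ψ(y)) + ψ(φ(y)) = 0 for all y. -/
import Mathlib


/-- In a T-quasigroup `x·y = φ(x) + ψ(y)` over an abelian group, the Schröder
identity `(x·y)·(y·x) = x` holds iff `φ² + ψ² = ε` and `φψ + ψφ = 0`. -/
theorem tquasigroup_schroeder_iff {Q : Type*} [AddCommGroup Q]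
    (φ ψ : AddAut Q) :
    (∀ x y : Q, φ (φ x + ψ y) + ψ (φ y + ψ x) = x) ↔
      ((∀ x : Q, φ (φ x) + ψ (ψ x) = x) ∧
       (∀ y : Q, φ (ψ y) + ψ (φ y) = 0)) := by
  constructor
  · intro h
    constructor
    · intro x
      have := h x 0
      simpa using this
    · intro y
      have h1 := h 0 y
      simpa using h1
  · rintro ⟨h1, h2⟩ x y
    have := h1 x
    have := h2 y
    simp only [map_add] at *
    calc φ (φ x) + φ (ψ y) + (ψ (φ y) + ψ (ψ x))
        = (φ (φ x) + ψ (ψ x)) + (φ (ψ y) + ψ (φ y)) := by abel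
      _ = x := by rw [h1, h2]; simp
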